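/- arXiv:2511.10576 — 2 statements merged into one kernel-verified Lean document; each statement's English description precedes it below -/
import Mathlib

section
/- The volume of the intersection of the box with the asymmetrically scaled $\ell_1$-ball satisfies $\mathrm{vol}(\mathcal{D} \cap \widetilde{\mathcal{B}}_1^t(\bar{x})) = \mathrm{vol}(\mathcal{D}) \cdot \frac{t^k}{k!} \sum_{r=0}^{t-1} (-1)^r \binom{k}{r} (1 - r/t)^k$. -/
open scoped ENNReal

noncomputable def deltaE {k : ℕ} (a b x : Fin k → ℝ) (i : Fin k) (y : Fin k → ℝ) : ℝ≥0∞ :=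
  if y i = x i then 0
  else if x i < y i then (if b i = x i then ⊤ else ENNReal.ofReal ((y i - x i) / (b i - x i)))
  else (if a i = x i then ⊤ else ENNReal.ofReal ((y i - x i) / (a i - x i)))

/-!
On each side of `xᵢ` the scaled distance is an affine bijection from that part of `[aᵢ, bᵢ]`
onto `[0, 1]`, so it pushes Lebesgue measure on `[aᵢ, bᵢ]` forward to `(bᵢ - aᵢ)` times Lebesgue
measure on `[0, 1]`. Hence the volume is `vol 𝒟` times the volume of `{u ∈ [0,1]ᵏ | ∑ uᵢ ≤ t}`,
the Irwin–Hall distribution function `(1/k!) ∑ⱼ (-1)ʲ C(k,j) (t - j)₊ᵏ`. That formula follows by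
induction on `k`: integrate out one coordinate and recombine the binomial coefficients by
Pascal's rule.
-/

open MeasureTheory Set

noncomputable def scaledDist (a b x y : ℝ) : ℝ :=
  if x < y then (y - x) / (b - x) else (y - x) / (a - x)

lemma measurable_scaledDist (a b x : ℝ) : Measurable (scaledDist a b x) :=
  Measurable.ite (measurableSet_lt measurable_const measurable_id) (by fun_prop) (by fun_prop)

lemma scaledDist_nonneg {a b x y : ℝ} (hx : x ∈ Icc a b) (hy : y ∈ Icc a b) :
    0 ≤ scaledDist a b x y := by
  unfold scaledDist
  split_ifs with h
  · exact div_nonneg (by linarith) (by linarith [hy.2])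
  · exact div_nonneg_of_nonpos (by linarith) (by linarith [hx.1])

lemma deltaE_eq_ofReal_scaledDist {k : ℕ} {a b x y : Fin k → ℝ} {i : Fin k}
    (hy : y i ∈ Icc (a i) (b i)) :
    deltaE a b x i y = ENNReal.ofReal (scaledDist (a i) (b i) (x i) (y i)) := by
  unfold deltaE scaledDist
  rcases lt_trichotomy (y i) (x i) with h | h | h
  · simp [h.ne, not_lt.mpr h.le, (hy.1.trans_lt h).ne]
  · simp [h]
  · simp [h.ne', h, (h.trans_le hy.2).ne']

lemma volume_preimage_sub_div (x : ℝ) {c : ℝ} (hc : c ≠ 0) (s : Set ℝ) :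
    volume ((fun y => (y - x) / c) ⁻¹' s) = ENNReal.ofReal |c| * volume s := by
  simp only [div_eq_mul_inv, sub_eq_add_neg]
  rw [show (fun y => (y + -x) * c⁻¹) = (· * c⁻¹) ∘ (· + -x) from rfl, preimage_comp,
    measure_preimage_add_right, Real.volume_preimage_mul_right (inv_ne_zero hc), inv_inv]

lemma map_restrict_uIcc_sub_div (x e : ℝ) :
    (volume.restrict (uIcc x e)).map (fun y => (y - x) / (e - x)) =
      ENNReal.ofReal |e - x| • volume.restrict (Icc 0 1) := by
  rcases eq_or_ne e x with rfl | he
  · simp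
  have hpre : (fun y => (y - x) / (e - x)) ⁻¹' Icc 0 1 = uIcc x e := by
    rw [← uIcc_of_le zero_le_one,
      show (fun y => (y - x) / (e - x)) = (· / (e - x)) ∘ (· - x) from rfl, preimage_comp,
      preimage_div_const_uIcc (sub_ne_zero.mpr he), preimage_sub_const_uIcc]
    simp
  have hf : Measurable fun y => (y - x) / (e - x) := by fun_prop
  ext s hs
  rw [Measure.map_apply hf hs, Measure.restrict_apply (hf hs),
    Measure.smul_apply, Measure.restrict_apply hs, ← hpre, ← preimage_inter,
    volume_preimage_sub_div x (sub_ne_zero.mpr he), smul_eq_mul]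

lemma map_restrict_Icc_scaledDist {a b x : ℝ} (hx : x ∈ Icc a b) :
    (volume.restrict (Icc a b)).map (scaledDist a b x) =
      ENNReal.ofReal (b - a) • volume.restrict (Icc 0 1) := by
  have hsplit :
      volume.restrict (Icc a b) = volume.restrict (uIcc x a) + volume.restrict (uIcc x b) := by
    rw [uIcc_of_ge hx.1, uIcc_of_le hx.2, ← Measure.restrict_union_add_inter _ measurableSet_Icc,
      Icc_union_Icc_eq_Icc hx.1 hx.2, Icc_inter_Icc_eq_singleton hx.1 hx.2,
      Measure.restrict_singleton, measure_singleton, zero_smul, add_zero]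
  have hleft : scaledDist a b x =ᵐ[volume.restrict (uIcc x a)] fun y => (y - x) / (a - x) := by
    refine ae_restrict_of_forall_mem measurableSet_uIcc fun y hy => ?_
    rw [uIcc_of_ge hx.1] at hy
    simp [scaledDist, not_lt.mpr hy.2]
  have hright : scaledDist a b x =ᵐ[volume.restrict (uIcc x b)] fun y => (y - x) / (b - x) := by
    refine ae_restrict_of_forall_mem measurableSet_uIcc fun y hy => ?_
    rw [uIcc_of_le hx.2] at hy
    rcases hy.1.eq_or_lt with rfl | h
    · simp [scaledDist]
    · simp [scaledDist, h]
  rw [hsplit, Measure.map_add _ _ (measurable_scaledDist a b x), Measure.map_congr hleft,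
    Measure.map_congr hright, map_restrict_uIcc_sub_div, map_restrict_uIcc_sub_div, ← add_smul,
    abs_of_nonpos (sub_nonpos.mpr hx.1), abs_of_nonneg (sub_nonneg.mpr hx.2),
    ← ENNReal.ofReal_add (by linarith [hx.1]) (by linarith [hx.2])]
  congr 2
  ring

lemma map_restrict_pi_Icc_scaledDist {ι : Type*} [Fintype ι] {a b x : ι → ℝ}
    (hx : ∀ i, x i ∈ Icc (a i) (b i)) :
    (volume.restrict (univ.pi fun i => Icc (a i) (b i))).map
        (fun y i => scaledDist (a i) (b i) (x i) (y i)) =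
      ENNReal.ofReal (∏ i, (b i - a i)) • volume.restrict (univ.pi fun _ => Icc 0 1) := by
  rw [volume_pi, Measure.restrict_pi_pi, Measure.restrict_pi_pi,
    Measure.pi_map_pi fun i => (measurable_scaledDist _ _ _).aemeasurable]
  refine Measure.pi_eq fun s hs => ?_
  simp only [Measure.smul_apply, Measure.pi_pi, map_restrict_Icc_scaledDist (hx _), smul_eq_mul,
    ENNReal.ofReal_prod_of_nonneg fun i _ => sub_nonneg.mpr ((hx i).1.trans (hx i).2),
    Finset.prod_mul_distrib]

/-- `v₊ⁿ`, with `0₊⁰ = 1`: then `irwinHallCDF 0` is the unit step and the induction on the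
dimension starts at `0`. -/
noncomputable def truncPow (n : ℕ) (v : ℝ) : ℝ :=
  if 0 ≤ v then v ^ n else 0

lemma truncPow_of_nonneg {n : ℕ} {v : ℝ} (hv : 0 ≤ v) : truncPow n v = v ^ n := if_pos hv

lemma truncPow_of_nonpos {n : ℕ} (hn : n ≠ 0) {v : ℝ} (hv : v ≤ 0) : truncPow n v = 0 := by
  rcases hv.lt_or_eq with hv | rfl
  · exact if_neg hv.not_ge
  · simp [truncPow, hn]

lemma monotone_truncPow (n : ℕ) : Monotone (truncPow n) := by
  intro v w hvw
  unfold truncPow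
  split_ifs with hv hw hw
  · exact pow_le_pow_left₀ hv hvw n
  · exact absurd (hv.trans hvw) hw
  · exact pow_nonneg hw n
  · exact le_rfl

lemma continuous_truncPow_succ (n : ℕ) : Continuous (truncPow (n + 1)) :=
  Continuous.if_le (continuous_pow _) continuous_const continuous_const continuous_id
    fun v hv => by simp [← hv]

-- Only a right derivative: `truncPow 1` has a corner at `0`.
lemma hasDerivWithinAt_truncPow_succ (n : ℕ) (v : ℝ) :
    HasDerivWithinAt (truncPow (n + 1)) ((n + 1) * truncPow n v) (Ioi v) v := by
  rcases lt_or_ge v 0 with hv | hv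
  · have hzero : truncPow (n + 1) =ᶠ[nhds v] fun _ => 0 :=
      (eventually_lt_nhds hv).mono fun w hw => if_neg hw.not_ge
    rw [truncPow, if_neg hv.not_ge, mul_zero]
    exact ((hasDerivAt_const v 0).congr_of_eventuallyEq hzero).hasDerivWithinAt
  · rw [truncPow_of_nonneg hv]
    refine ((hasDerivAt_pow (n + 1) v).hasDerivWithinAt.congr
      (fun w hw => truncPow_of_nonneg (hv.trans hw.le)) (truncPow_of_nonneg hv)).congr_deriv ?_
    simp

lemma integral_truncPow_sub (n : ℕ) (c : ℝ) :
    ∫ s in (0 : ℝ)..1, truncPow n (c - s) =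
      (truncPow (n + 1) c - truncPow (n + 1) (c - 1)) / (n + 1) := by
  rw [intervalIntegral.integral_comp_sub_left (truncPow n), sub_zero, sub_div]
  refine intervalIntegral.integral_eq_sub_of_hasDeriv_right_of_le (by linarith)
    ((continuous_truncPow_succ n).div_const _).continuousOn (fun v _ => ?_)
    ((monotone_truncPow n).intervalIntegrable)
  refine ((hasDerivWithinAt_truncPow_succ n v).div_const _).congr_deriv ?_
  field_simp

noncomputable def irwinHallCDF (n : ℕ) (r : ℝ) : ℝ :=
  (∑ j ∈ Finset.range (n + 1), (-1) ^ j * n.choose j * truncPow n (r - j)) / n.factorial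

lemma alternating_sum_choose_mul_sub (n : ℕ) (P : ℕ → ℝ) :
    ∑ j ∈ Finset.range (n + 1), (-1) ^ j * n.choose j * (P j - P (j + 1)) =
      ∑ j ∈ Finset.range (n + 2), (-1) ^ j * (n + 1).choose j * P j := by
  calc _ = ∑ j ∈ Finset.range (n + 1), (n.choose j : ℝ) * ((-1) ^ j * P j) +
        ∑ j ∈ Finset.range (n + 1), (n.choose j : ℝ) * ((-1) ^ (j + 1) * P (j + 1)) := by
        rw [← Finset.sum_add_distrib]
        exact Finset.sum_congr rfl fun j _ => by ring
    _ = _ := by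
        rw [← Finset.sum_choose_succ_mul (fun j _ => (-1 : ℝ) ^ j * P j) n]
        exact Finset.sum_congr rfl fun j _ => by ring

lemma integral_irwinHallCDF_sub (n : ℕ) (r : ℝ) :
    ∫ s in (0 : ℝ)..1, irwinHallCDF n (r - s) = irwinHallCDF (n + 1) r := by
  have hint : ∀ j ∈ Finset.range (n + 1), IntervalIntegrable
      (fun s => (-1) ^ j * n.choose j * truncPow n (r - s - j)) volume 0 1 := fun j _ =>
    ((monotone_truncPow n).comp_antitone fun s s' h => by linarith : Antitone _)
      |>.intervalIntegrable.const_mul _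
  have hterm : ∀ j : ℕ, ∫ s in (0 : ℝ)..1, truncPow n (r - s - j) =
      (truncPow (n + 1) (r - j) - truncPow (n + 1) (r - (j + 1 : ℕ))) / (n + 1) := fun j => by
    simp_rw [sub_right_comm r _ (j : ℝ), integral_truncPow_sub, sub_sub, Nat.cast_succ]
  simp only [irwinHallCDF, intervalIntegral.integral_div,
    intervalIntegral.integral_finsetSum hint, intervalIntegral.integral_const_mul, hterm]
  rw [← alternating_sum_choose_mul_sub n fun j => truncPow (n + 1) (r - j), Nat.factorial_succ,
    Nat.cast_mul, Finset.sum_div, Finset.sum_div]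
  refine Finset.sum_congr rfl fun j _ => ?_
  push_cast
  field_simp

lemma pi_setOf_sum_le_succ (ν : Measure ℝ) [SigmaFinite ν] (n : ℕ) (r : ℝ) :
    Measure.pi (fun _ : Fin (n + 1) => ν) {u | ∑ i, u i ≤ r} =
      ∫⁻ s, Measure.pi (fun _ : Fin n => ν) {u | ∑ i, u i ≤ r - s} ∂ν := by
  have hA : MeasurableSet {u : Fin (n + 1) → ℝ | ∑ i, u i ≤ r} :=
    measurableSet_le (by fun_prop) measurable_const
  have he := (measurePreserving_piFinSuccAbove (fun _ : Fin (n + 1) => ν) 0).symm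
  rw [← he.measure_preimage hA.nullMeasurableSet, Measure.prod_apply (he.measurable hA)]
  refine lintegral_congr fun s => congr_arg _ (ext fun z => ?_)
  simp [Fin.sum_univ_succ, le_sub_iff_add_le']

lemma toReal_pi_restrict_Icc_setOf_sum_le (n : ℕ) (r : ℝ) :
    (Measure.pi (fun _ : Fin n => volume.restrict (Icc (0 : ℝ) 1)) {u | ∑ i, u i ≤ r}).toReal =
      irwinHallCDF n r := by
  induction n generalizing r with
  | zero =>
    by_cases hr : 0 ≤ r <;> simp [irwinHallCDF, truncPow, hr]
  | succ n ih =>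
    have hmono : Monotone fun r =>
        Measure.pi (fun _ : Fin n => volume.restrict (Icc (0 : ℝ) 1)) {u | ∑ i, u i ≤ r} :=
      fun r r' h => measure_mono fun u hu => le_trans hu h
    have hmeas : Measurable fun s =>
        Measure.pi (fun _ : Fin n => volume.restrict (Icc (0 : ℝ) 1)) {u | ∑ i, u i ≤ r - s} :=
      (hmono.comp_antitone fun s s' h => sub_le_sub_left h r).measurable
    rw [pi_setOf_sum_le_succ, ← integral_toReal hmeas.aemeasurable
      (ae_of_all _ fun s => measure_lt_top _ _)]
    simp_rw [ih]
    rw [integral_Icc_eq_integral_Ioc, ← intervalIntegral.integral_of_le zero_le_one,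
      integral_irwinHallCDF_sub]

lemma irwinHallCDF_natCast {k : ℕ} (hk : k ≠ 0) (t : ℕ) :
    irwinHallCDF k t = (t : ℝ) ^ k / k.factorial *
      ∑ j ∈ Finset.range t, (-1) ^ j * k.choose j * (1 - (j : ℝ) / t) ^ k := by
  set f : ℕ → ℝ := fun j => (-1) ^ j * k.choose j * truncPow k (t - j)
  have hsum : ∑ j ∈ Finset.range (k + 1), f j = ∑ j ∈ Finset.range t, f j := by
    rw [Finset.sum_subset (Finset.range_subset_range.mpr (Nat.le_add_right (k + 1) t))
      fun j _ hj => ?_, ← Finset.sum_subset (Finset.range_subset_range.mpr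
        (Nat.le_add_left t (k + 1))) fun j _ hj => ?_]
    · rw [Finset.mem_range, not_lt] at hj
      simp [f, truncPow_of_nonpos hk (sub_nonpos.mpr (Nat.cast_le.mpr hj))]
    · rw [Finset.mem_range, not_lt] at hj
      simp [f, Nat.choose_eq_zero_of_lt hj]
  rw [irwinHallCDF, hsum, Finset.mul_sum, Finset.sum_div]
  refine Finset.sum_congr rfl fun j hj => ?_
  have hjt : (j : ℝ) < t := Nat.cast_lt.mpr (Finset.mem_range.mp hj)
  simp only [f]
  rw [truncPow_of_nonneg (sub_nonneg.mpr hjt.le),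
    show (t : ℝ) - j = t * (1 - j / t) by
      rw [mul_sub, mul_one, mul_div_cancel₀ _ ((Nat.cast_nonneg j).trans_lt hjt).ne'], mul_pow]
  ring

theorem volume_box_inter_scaledL1Ball_general {k : ℕ} (hk : 1 ≤ k) (t : ℕ)
    (a b x : Fin k → ℝ) (hx : ∀ i, a i ≤ x i ∧ x i ≤ b i) :
    MeasureTheory.volume
        ({y : Fin k → ℝ | ∀ i, y i ∈ Set.Icc (a i) (b i)} ∩
          {y : Fin k → ℝ | ∑ i, deltaE a b x i y ≤ (t : ℝ≥0∞)}) =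
      ENNReal.ofReal ((∏ i, (b i - a i)) * ((t : ℝ) ^ k / (Nat.factorial k)) *
        ∑ r ∈ Finset.range t, (-1 : ℝ) ^ r * (Nat.choose k r) * (1 - (r : ℝ) / t) ^ k) := by
  set T : (Fin k → ℝ) → Fin k → ℝ := fun y i => scaledDist (a i) (b i) (x i) (y i)
  have hT : Measurable T := measurable_pi_lambda _ fun i =>
    (measurable_scaledDist _ _ _).comp (measurable_pi_apply i)
  have hS : MeasurableSet {u : Fin k → ℝ | ∑ i, u i ≤ t} :=
    measurableSet_le (by fun_prop) measurable_const
  have hset : {y : Fin k → ℝ | ∀ i, y i ∈ Icc (a i) (b i)} ∩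
      {y | ∑ i, deltaE a b x i y ≤ (t : ℝ≥0∞)} =
      T ⁻¹' {u | ∑ i, u i ≤ t} ∩ univ.pi fun i => Icc (a i) (b i) := by
    ext y
    simp only [mem_inter_iff, mem_ofPred_eq, mem_preimage, mem_univ_pi, and_comm (a := ∀ i, _)]
    refine and_congr_left fun hy => ?_
    rw [Finset.sum_congr rfl fun i _ => deltaE_eq_ofReal_scaledDist (hy i),
      ← ENNReal.ofReal_sum_of_nonneg fun i _ => scaledDist_nonneg (hx i) (hy i),
      ← ENNReal.ofReal_natCast, ENNReal.ofReal_le_ofReal_iff (Nat.cast_nonneg t)]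
  rw [hset, ← Measure.restrict_apply' (MeasurableSet.univ_pi fun _ => measurableSet_Icc),
    ← Measure.map_apply hT hS, map_restrict_pi_Icc_scaledDist hx, Measure.smul_apply,
    smul_eq_mul, volume_pi, Measure.restrict_pi_pi, ← ENNReal.ofReal_toReal (measure_ne_top _ _),
    toReal_pi_restrict_Icc_setOf_sum_le, irwinHallCDF_natCast (by omega),
    ← ENNReal.ofReal_mul (Finset.prod_nonneg fun i _ => sub_nonneg.mpr ((hx i).1.trans (hx i).2)),
    mul_assoc]

/-- `vol(D ∩ B̃₁ᵗ(x)) = vol(D) · (tᵏ/k!) · ∑_{r=0}^{t-1} (-1)^r C(k,r) (1-r/t)^k`. -/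
theorem volume_box_inter_scaledL1Ball {k : ℕ} (hk : 1 ≤ k) (t : ℕ) (ht : 1 ≤ t) (htk : t ≤ k)
    (a b x : Fin k → ℝ) (hab : ∀ i, a i < b i) (hx : ∀ i, a i ≤ x i ∧ x i ≤ b i) :
    MeasureTheory.volume
        ({y : Fin k → ℝ | ∀ i, y i ∈ Set.Icc (a i) (b i)} ∩
          {y : Fin k → ℝ | ∑ i, deltaE a b x i y ≤ (t : ℝ≥0∞)}) =
      ENNReal.ofReal ((∏ i, (b i - a i)) * ((t : ℝ) ^ k / (Nat.factorial k)) *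
        ∑ r ∈ Finset.range t, (-1 : ℝ) ^ r * (Nat.choose k r) * (1 - (r : ℝ) / t) ^ k) :=
  volume_box_inter_scaledL1Ball_general hk t a b x hx
end

section
/- The minimum of a linear function $y \mapsto \sum_{i=1}^k w_i y_i$ over the $\ell_0$-ball $\mathcal{B}_0^t(\bar{x})$ equals $\sum_{i=1}^k w_i \bar{x}_i$ plus the sum of the $t$ smallest values among $d_1^-, \dots, d_k^-$, where $d_i^- = \min(w_i(b_i - \bar{x}_i), w_i(a_i - \bar{x}_i))$. -/
/-!
Away from `x̄`, coordinate `i` can lower the objective by at most `dᵢ⁻ ≤ 0`, and it attains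
this at an endpoint of `[aᵢ, bᵢ]`. So every point of the ℓ₀-ball costs at least
`∑ wᵢ x̄ᵢ + ∑_{i ∈ S} dᵢ⁻` for some set `S` of at most `t` coordinates, and any such bound
is attained. Among sets of at most `t` coordinates, the `t` with the smallest `dᵢ⁻` minimise
`∑_{i ∈ S} dᵢ⁻`: an exchange argument, using that the dropped values lie below a nonpositive
threshold that the added values lie above.
-/

open Finset

theorem Finset.sum_le_sum_of_card_le_of_forall_le {ι M : Type*} [AddCommMonoid M]
    [LinearOrder M] [IsOrderedAddMonoid M] {A B : Finset ι} {f : ι → M} (hcard : #B ≤ #A)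
    (hA : ∀ a ∈ A, f a ≤ 0) (hAB : ∀ a ∈ A, ∀ b ∈ B, f a ≤ f b) :
    ∑ a ∈ A, f a ≤ ∑ b ∈ B, f b := by
  rcases B.eq_empty_or_nonempty with rfl | hB
  · simpa using sum_nonpos hA
  set c := min (B.inf' hB f) 0
  calc ∑ a ∈ A, f a ≤ #A • c :=
        sum_le_card_nsmul _ _ _ fun a ha => le_min ((le_inf'_iff hB f).2 (hAB a ha)) (hA a ha)
    _ ≤ #B • c := nsmul_le_nsmul_left_of_nonpos (min_le_right _ _) hcard
    _ ≤ ∑ b ∈ B, f b :=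
        card_nsmul_le_sum _ _ _ fun b hb => (min_le_left _ _).trans (inf'_le f hb)

theorem Finset.sum_le_sum_of_card_le_of_forall_sdiff_le {ι M : Type*} [DecidableEq ι]
    [AddCommMonoid M] [LinearOrder M] [IsOrderedAddMonoid M] {S T : Finset ι} {f : ι → M}
    (hcard : #S ≤ #T) (hT : ∀ a ∈ T \ S, f a ≤ 0)
    (hTS : ∀ a ∈ T \ S, ∀ b ∈ S \ T, f a ≤ f b) :
    ∑ i ∈ T, f i ≤ ∑ i ∈ S, f i := by
  rw [← sum_inter_add_sum_sdiff T S, ← sum_inter_add_sum_sdiff S T, inter_comm]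
  gcongr 1
  exact sum_le_sum_of_card_le_of_forall_le (card_sdiff_le_card_sdiff_iff.2 hcard) hT hTS

theorem Fin.sum_filter_val_lt_le_sum {M : Type*} [AddCommMonoid M] [LinearOrder M]
    [IsOrderedAddMonoid M] {k t : ℕ} {e : Fin k → M} (he : ∀ i, e i ≤ 0)
    (hmono : Monotone e) {S : Finset (Fin k)} (hS : #S ≤ t) :
    ∑ i ∈ univ.filter (fun i : Fin k => (i : ℕ) < t), e i ≤ ∑ i ∈ S, e i := by
  refine sum_le_sum_of_card_le_of_forall_sdiff_le ?_ (fun a _ => he a) fun a ha b hb => hmono ?_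
  · rw [Fin.card_filter_val_lt]
    exact le_min ((card_le_univ S).trans_eq (Fintype.card_fin k)) hS
  · simp only [mem_sdiff, mem_filter, mem_univ, true_and] at ha hb
    exact Fin.le_def.2 (by omega)

theorem Finset.sum_mul_eq_add_sum_mul_sub {ι R : Type*} [Fintype ι] [Ring R] {w x y : ι → R}
    {P : Finset ι} (h : ∀ i ∉ P, y i = x i) :
    ∑ i, w i * y i = ∑ i, w i * x i + ∑ i ∈ P, w i * (y i - x i) := by
  rw [sum_subset (subset_univ P) fun i _ hi => by rw [h i hi, sub_self, mul_zero],
    ← sum_add_distrib]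
  exact sum_congr rfl fun i _ => by rw [mul_sub, add_sub_cancel]

section Coordinate

variable {R : Type*} [CommRing R] [LinearOrder R]

theorem min_mul_sub_le_mul_sub [IsOrderedRing R] {w a b x v : R} (hav : a ≤ v) (hvb : v ≤ b) :
    min (w * (b - x)) (w * (a - x)) ≤ w * (v - x) := by
  rcases le_total 0 w with hw | hw
  · exact (min_le_right _ _).trans (mul_le_mul_of_nonneg_left (by gcongr) hw)
  · exact (min_le_left _ _).trans (mul_le_mul_of_nonpos_left (by gcongr) hw)

theorem min_mul_sub_nonpos [IsOrderedRing R] {w a b x : R} (hax : a ≤ x) (hxb : x ≤ b) :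
    min (w * (b - x)) (w * (a - x)) ≤ 0 :=
  (min_mul_sub_le_mul_sub hax hxb).trans_eq (by rw [sub_self, mul_zero])

theorem exists_mem_Icc_mul_sub_eq_min {a b : R} (hab : a ≤ b) (w x : R) :
    ∃ v ∈ Set.Icc a b, w * (v - x) = min (w * (b - x)) (w * (a - x)) := by
  rcases min_choice (w * (b - x)) (w * (a - x)) with h | h
  · exact ⟨b, Set.right_mem_Icc.2 hab, h.symm⟩
  · exact ⟨a, Set.left_mem_Icc.2 hab, h.symm⟩

end Coordinate

section L0Ball

variable {ι : Type*} [Fintype ι] (w : ι → ℝ) {a b x : ι → ℝ} {t : ℕ}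

def l0Ball (a b x : ι → ℝ) (t : ℕ) : Set (ι → ℝ) :=
  {y | (∀ i, y i ∈ Set.Icc (a i) (b i)) ∧ (univ.filter (fun i => y i ≠ x i)).card ≤ t}

theorem exists_mem_l0Ball_sum_mul_eq [DecidableEq ι] (hx : ∀ i, x i ∈ Set.Icc (a i) (b i))
    {P : Finset ι} (hP : #P ≤ t) :
    ∃ y ∈ l0Ball a b x t, ∑ i, w i * y i =
      ∑ i, w i * x i + ∑ i ∈ P, min (w i * (b i - x i)) (w i * (a i - x i)) := by
  choose z hz hzw using fun i => exists_mem_Icc_mul_sub_eq_min ((hx i).1.trans (hx i).2) (w i) (x i)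
  refine ⟨P.piecewise z x, ⟨fun i => ?_, ?_⟩, ?_⟩
  · by_cases hi : i ∈ P
    · simpa [hi] using hz i
    · simpa [hi] using hx i
  · refine (card_le_card fun i hi => ?_).trans hP
    contrapose! hi
    simp [hi]
  · rw [sum_mul_eq_add_sum_mul_sub (y := P.piecewise z x)
      fun i hi => P.piecewise_eq_of_notMem _ _ hi]
    exact congrArg _ (sum_congr rfl fun i hi => by rw [P.piecewise_eq_of_mem _ _ hi, hzw])

theorem exists_card_le_add_sum_min_le_of_mem_l0Ball {y : ι → ℝ} (hy : y ∈ l0Ball a b x t) :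
    ∃ S : Finset ι, #S ≤ t ∧
      ∑ i, w i * x i + ∑ i ∈ S, min (w i * (b i - x i)) (w i * (a i - x i)) ≤
        ∑ i, w i * y i := by
  refine ⟨_, hy.2, ?_⟩
  rw [sum_mul_eq_add_sum_mul_sub (x := x) (y := y) (P := univ.filter (fun i => y i ≠ x i))
    fun i hi => by simpa using hi]
  gcongr with i
  exact min_mul_sub_le_mul_sub (hy.1 i).1 (hy.1 i).2

end L0Ball

theorem isLeast_linear_l0Ball_general {k : ℕ} (t : ℕ)
    (w a b x : Fin k → ℝ) (hx : ∀ i, a i ≤ x i ∧ x i ≤ b i)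
    (σ : Equiv.Perm (Fin k))
    (hσ : ∀ i j : Fin k, i ≤ j →
      min (w (σ i) * (b (σ i) - x (σ i))) (w (σ i) * (a (σ i) - x (σ i))) ≤
        min (w (σ j) * (b (σ j) - x (σ j))) (w (σ j) * (a (σ j) - x (σ j)))) :
    IsLeast ((fun y : Fin k → ℝ => ∑ i, w i * y i) ''
        {y : Fin k → ℝ | (∀ i, y i ∈ Set.Icc (a i) (b i)) ∧
          (Finset.univ.filter (fun i => y i ≠ x i)).card ≤ t})
      (∑ i, w i * x i +
        ∑ i ∈ Finset.univ.filter (fun i : Fin k => (i : ℕ) < t),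
          min (w (σ i) * (b (σ i) - x (σ i))) (w (σ i) * (a (σ i) - x (σ i)))) := by
  set d : Fin k → ℝ := fun i => min (w i * (b i - x i)) (w i * (a i - x i))
  set T := univ.filter (fun i : Fin k => (i : ℕ) < t)
  have hT : #(T.map σ.toEmbedding) ≤ t := by
    rw [card_map, Fin.card_filter_val_lt]
    exact min_le_right _ _
  constructor
  · obtain ⟨y, hy, hyw⟩ := exists_mem_l0Ball_sum_mul_eq w hx hT
    exact ⟨y, hy, hyw.trans (by rw [sum_map]; rfl)⟩
  · rintro _ ⟨y, hy, rfl⟩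
    obtain ⟨S, hSt, hS⟩ :=
      exists_card_le_add_sum_min_le_of_mem_l0Ball w (hy : y ∈ l0Ball a b x t)
    calc ∑ i, w i * x i + ∑ i ∈ T, d (σ i)
        ≤ ∑ i, w i * x i + ∑ i ∈ S.map σ.symm.toEmbedding, d (σ i) :=
          (add_le_add_iff_left _).2 <| Fin.sum_filter_val_lt_le_sum
            (fun i => min_mul_sub_nonpos (hx _).1 (hx _).2) (fun i j h => hσ i j h)
            ((card_map σ.symm.toEmbedding).trans_le hSt)
      _ = ∑ i, w i * x i + ∑ i ∈ S, d i := by simp [sum_map]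
      _ ≤ ∑ i, w i * y i := hS

/-- The minimum of a linear function over the ℓ₀-ball equals `∑ wᵢ xᵢ` plus the sum of
the `t` smallest values among the minimum entry contributions `dᵢ⁻`. -/
theorem isLeast_linear_l0Ball {k : ℕ} (hk : 1 ≤ k) (t : ℕ) (ht : 1 ≤ t) (htk : t ≤ k)
    (w a b x : Fin k → ℝ) (hab : ∀ i, a i ≤ b i) (hx : ∀ i, a i ≤ x i ∧ x i ≤ b i)
    (σ : Equiv.Perm (Fin k))
    (hσ : ∀ i j : Fin k, i ≤ j →
      min (w (σ i) * (b (σ i) - x (σ i))) (w (σ i) * (a (σ i) - x (σ i))) ≤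
        min (w (σ j) * (b (σ j) - x (σ j))) (w (σ j) * (a (σ j) - x (σ j)))) :
    IsLeast ((fun y : Fin k → ℝ => ∑ i, w i * y i) ''
        {y : Fin k → ℝ | (∀ i, y i ∈ Set.Icc (a i) (b i)) ∧
          (Finset.univ.filter (fun i => y i ≠ x i)).card ≤ t})
      (∑ i, w i * x i +
        ∑ i ∈ Finset.univ.filter (fun i : Fin k => (i : ℕ) < t),
          min (w (σ i) * (b (σ i) - x (σ i))) (w (σ i) * (a (σ i) - x (σ i)))) :=
  isLeast_linear_l0Ball_general t w a b x hx σ hσ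
end
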